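/- Every block of a minimally 2-edge-connected (multi)graph is minimally 2-edge-connected. -/

import Mathlib

/-!
Let `(S, B)` be a block and `e ∈ B`. By minimality `G - e` is connected but has a bridge `f`,
so `{e, f}` is an edge cut of `G` separating the ends of `e`. A block contains every path of `G`
between two of its vertices (otherwise the path could be added to it as an ear), and a path in
`G - e` joining the ends of `e` must cross `f`; hence `f ∈ B` and `{e, f}` is an edge cut of the
block too. So the block is not `3`-edge-connected and `f` is a bridge of `B - e`. The same path
property joins the ends of any `f ∈ B` inside `B - f`, so the block is `2`-edge-connected.
-/

/-- A multigraph on vertex type `V` with edge type `E`: each edge has an unordered pair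
of endvertices. -/
structure Multigraph (V : Type) (E : Type) where
  ends : E → Sym2 V

namespace Multigraph

variable {V E : Type}

/-- Walks in a multigraph. -/
inductive Walk (G : Multigraph V E) : V → V → Type
  | nil (v : V) : Walk G v v
  | cons {u v w : V} (e : E) (h : G.ends e = s(u, v)) (p : Walk G v w) : Walk G u w

namespace Walk

variable {G : Multigraph V E}

/-- The list of vertices visited by a walk. -/
def support : ∀ {u v : V}, G.Walk u v → List V
  | _, _, .nil v => [v]
  | u, _, .cons _ _ p => u :: p.support

/-- The list of edges used by a walk. -/
def edges : ∀ {u v : V}, G.Walk u v → List E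
  | _, _, .nil _ => []
  | _, _, .cons e _ p => e :: p.edges

end Walk

/-- There is a `u`–`v` walk all of whose edges lie in `B` and all of whose vertices lie in `S`. -/
def ReachableIn (G : Multigraph V E) (S : Set V) (B : Set E) (u v : V) : Prop :=
  ∃ p : G.Walk u v, (∀ e ∈ p.edges, e ∈ B) ∧ ∀ w ∈ p.support, w ∈ S

/-- The subgraph with vertex set `S` and edge set `B` is connected. -/
def ConnectedOn (G : Multigraph V E) (S : Set V) (B : Set E) : Prop :=
  S.Nonempty ∧ ∀ u ∈ S, ∀ v ∈ S, G.ReachableIn S B u v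

/-- The subgraph `(S, B)` has edge-connectivity at least `k`: removing fewer than `k`
edges of `B` never disconnects it. -/
def EdgeConnAtLeastOn (G : Multigraph V E) (S : Set V) (B : Set E) (k : ℕ) : Prop :=
  ∀ F : Finset E, ↑F ⊆ B → F.card < k →
    ∀ u ∈ S, ∀ v ∈ S, G.ReachableIn S (B \ ↑F) u v

/-- The subgraph `(S, B)` is minimally `2`-edge-connected: its edge-connectivity equals `2`
and deleting any edge decreases the edge-connectivity below `2`. -/
def MinTwoEdgeConnOn (G : Multigraph V E) (S : Set V) (B : Set E) : Prop :=
  G.EdgeConnAtLeastOn S B 2 ∧ ¬ G.EdgeConnAtLeastOn S B 3 ∧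
    ∀ e ∈ B, ¬ G.EdgeConnAtLeastOn S (B \ {e}) 2

/-- `G` is minimally `2`-edge-connected. -/
def MinTwoEdgeConn (G : Multigraph V E) : Prop :=
  G.MinTwoEdgeConnOn Set.univ Set.univ

/-- `λ_G(u,v)`: the maximum number of pairwise edge-disjoint `u`–`v` paths in `G`. -/
noncomputable def lambda (G : Multigraph V E) (u v : V) : ℕ :=
  sSup {k | ∃ p : Fin k → G.Walk u v, (∀ i, (p i).support.Nodup) ∧
    ∀ i j, i ≠ j → ∀ e ∈ (p i).edges, e ∉ (p j).edges}

/-- `κ_G(u,v)`: the maximum number of pairwise internally disjoint `u`–`v` paths in `G`. -/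
noncomputable def kappa (G : Multigraph V E) (u v : V) : ℕ :=
  sSup {k | ∃ p : Fin k → G.Walk u v, (∀ i, (p i).support.Nodup) ∧
    ∀ i j, i ≠ j →
      ((∀ w ∈ (p i).support, w ∈ (p j).support → w = u ∨ w = v) ∧
        ∀ e ∈ (p i).edges, e ∉ (p j).edges)}

open Classical in
/-- The degree of a vertex: the number of edges incident with it. -/
noncomputable def degree (G : Multigraph V E) [Fintype E] (v : V) : ℕ :=
  (Finset.univ.filter fun e => v ∈ G.ends e).card

/-- The average edge-connectivity of `G`: the average of `λ_G(u,v)` over all unordered pairs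
of distinct vertices (computed as the sum over ordered pairs divided by `n(n-1)`). -/
noncomputable def avgLambda (G : Multigraph V E) [Fintype V] [DecidableEq V] : ℚ :=
  (∑ p ∈ Finset.univ.offDiag, (G.lambda p.1 p.2 : ℚ)) /
    ((Fintype.card V : ℚ) * ((Fintype.card V : ℚ) - 1))

/-- `G` is `2`-connected: it has at least three vertices, and deleting any single vertex
leaves a connected graph. -/
def TwoConnected (G : Multigraph V E) [Fintype V] : Prop :=
  3 ≤ Fintype.card V ∧ ∀ x u v : V, u ≠ x → v ≠ x → G.ReachableIn {x}ᶜ Set.univ u v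

/-- `f` is a bridge of the spanning subgraph with edge set `B`: its removal separates
its endvertices. -/
def IsBridgeOn (G : Multigraph V E) (B : Set E) (f : E) : Prop :=
  f ∈ B ∧ ∀ x y, G.ends f = s(x, y) → ¬ G.ReachableIn Set.univ (B \ {f}) x y

/-- All endvertices of edges of `B` lie in `S`. -/
def IsSubgraphPair (G : Multigraph V E) (S : Set V) (B : Set E) : Prop :=
  ∀ e ∈ B, ∀ x, x ∈ G.ends e → x ∈ S

/-- The subgraph `(S, B)` has no cut vertex. -/
def NoCutVertexOn (G : Multigraph V E) (S : Set V) (B : Set E) : Prop :=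
  ∀ x, ∀ u ∈ S, ∀ v ∈ S, u ≠ x → v ≠ x → G.ReachableIn (S \ {x}) B u v

/-- `(S, B)` is a block of `G`: a maximal connected subgraph without a cut vertex. -/
def IsBlock (G : Multigraph V E) (S : Set V) (B : Set E) : Prop :=
  G.IsSubgraphPair S B ∧ G.ConnectedOn S B ∧ G.NoCutVertexOn S B ∧
    ∀ S' B', S ⊆ S' → B ⊆ B' → G.IsSubgraphPair S' B' → G.ConnectedOn S' B' →
      G.NoCutVertexOn S' B' → S' = S ∧ B' = B

end Multigraph

namespace Multigraph

variable {V E : Type} {G : Multigraph V E}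

lemma exists_ends_eq (G : Multigraph V E) (e : E) : ∃ x y, G.ends e = s(x, y) :=
  Sym2.ind (f := fun z => ∃ x y, z = s(x, y)) (fun x y => ⟨x, y, rfl⟩) (G.ends e)

namespace Walk

variable {u v w : V}

lemma support_eq_cons : ∀ {u v : V} (p : G.Walk u v), p.support = u :: p.support.tail
  | _, _, .nil _ => rfl
  | _, _, .cons _ _ _ => rfl

lemma start_mem_support (p : G.Walk u v) : u ∈ p.support :=
  p.support_eq_cons ▸ List.mem_cons_self

lemma end_mem_support : ∀ {u v : V} (p : G.Walk u v), v ∈ p.support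
  | _, _, .nil _ => List.mem_singleton_self _
  | _, _, .cons _ _ p => List.mem_cons_of_mem _ p.end_mem_support

def append : ∀ {u v w : V}, G.Walk u v → G.Walk v w → G.Walk u w
  | _, _, _, .nil _, q => q
  | _, _, _, .cons e h p, q => .cons e h (p.append q)

@[simp]
lemma edges_append : ∀ {u v w : V} (p : G.Walk u v) (q : G.Walk v w),
    (p.append q).edges = p.edges ++ q.edges
  | _, _, _, .nil _, _ => rfl
  | _, _, _, .cons _ _ p, q => congrArg (_ :: ·) (p.edges_append q)

lemma support_append : ∀ {u v w : V} (p : G.Walk u v) (q : G.Walk v w),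
    (p.append q).support = p.support ++ q.support.tail
  | _, _, _, .nil _, q => q.support_eq_cons
  | _, _, _, .cons _ _ p, q => congrArg (_ :: ·) (p.support_append q)

lemma support_suffix_append : ∀ {u v w : V} (p : G.Walk u v) (q : G.Walk v w),
    q.support <:+ (p.append q).support
  | _, _, _, .nil _, _ => List.suffix_refl _
  | _, _, _, .cons _ _ p, q => (p.support_suffix_append q).trans (List.suffix_cons _ _)

def reverse : ∀ {u v : V}, G.Walk u v → G.Walk v u
  | _, _, .nil v => .nil v
  | _, _, .cons e h p => p.reverse.append (.cons e (h.trans Sym2.eq_swap) (.nil _))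

@[simp]
lemma edges_reverse : ∀ {u v : V} (p : G.Walk u v), p.reverse.edges = p.edges.reverse
  | _, _, .nil _ => rfl
  | _, _, .cons _ _ p => by simp [reverse, edges, p.edges_reverse]

@[simp]
lemma support_reverse : ∀ {u v : V} (p : G.Walk u v), p.reverse.support = p.support.reverse
  | _, _, .nil _ => rfl
  | _, _, .cons _ _ p => by simp [reverse, support_append, support, p.support_reverse]

lemma exists_eq_append_of_mem_support : ∀ {u v : V} (p : G.Walk u v), w ∈ p.support →
    ∃ (p₁ : G.Walk u w) (p₂ : G.Walk w v), p = p₁.append p₂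
  | _, _, .nil _, hw => by
      obtain rfl := List.mem_singleton.1 hw
      exact ⟨.nil _, .nil _, rfl⟩
  | _, _, .cons e h p, hw => by
      rcases List.mem_cons.1 hw with rfl | hw
      · exact ⟨.nil _, .cons e h p, rfl⟩
      · obtain ⟨p₁, p₂, rfl⟩ := p.exists_eq_append_of_mem_support hw
        exact ⟨.cons e h p₁, p₂, rfl⟩

lemma exists_path : ∀ {u v : V} (p : G.Walk u v),
    ∃ q : G.Walk u v, q.support.Nodup ∧ ∀ e ∈ q.edges, e ∈ p.edges
  | _, _, .nil v => ⟨.nil v, List.nodup_singleton v, fun _ => id⟩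
  | u, _, .cons e h p => by
      obtain ⟨q, hq, hqp⟩ := p.exists_path
      by_cases hu : u ∈ q.support
      · obtain ⟨q₁, q₂, rfl⟩ := q.exists_eq_append_of_mem_support hu
        refine ⟨q₂, hq.sublist (q₁.support_suffix_append q₂).sublist, fun g hg => ?_⟩
        exact List.mem_cons_of_mem _ (hqp g (by simp [hg]))
      · refine ⟨.cons e h q, List.nodup_cons.2 ⟨hu, hq⟩, fun g hg => ?_⟩
        rcases List.mem_cons.1 hg with rfl | hg
        · exact List.mem_cons_self
        · exact List.mem_cons_of_mem _ (hqp g hg)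

lemma mem_support_of_mem_edges : ∀ {u v : V} (p : G.Walk u v) {e : E}, e ∈ p.edges →
    ∀ x ∈ G.ends e, x ∈ p.support
  | _, _, .nil _, _, he => absurd he List.not_mem_nil
  | _, _, .cons g h p, e, he => by
      rcases List.mem_cons.1 he with rfl | he
      · intro x hx
        rw [h] at hx
        rcases Sym2.mem_iff.1 hx with rfl | rfl
        · exact List.mem_cons_self
        · exact List.mem_cons_of_mem _ p.start_mem_support
      · exact fun x hx => List.mem_cons_of_mem _ (p.mem_support_of_mem_edges he x hx)

end Walk

namespace ReachableIn

variable {S : Set V} {B : Set E} {u v w x y : V}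

lemma refl (hu : u ∈ S) : G.ReachableIn S B u u :=
  ⟨.nil u, fun _ he => absurd he List.not_mem_nil, fun _ hw => List.mem_singleton.1 hw ▸ hu⟩

lemma of_ends {e : E} (he : G.ends e = s(u, v)) (heB : e ∈ B) (hu : u ∈ S) (hv : v ∈ S) :
    G.ReachableIn S B u v :=
  ⟨.cons e he (.nil v), by simp [Walk.edges, heB], by simp [Walk.support, hu, hv]⟩

lemma mem_right (h : G.ReachableIn S B u v) : v ∈ S :=
  let ⟨p, _, hpS⟩ := h
  hpS v p.end_mem_support

lemma mono {S' : Set V} {B' : Set E} (hS : S ⊆ S') (hB : B ⊆ B')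
    (h : G.ReachableIn S B u v) : G.ReachableIn S' B' u v :=
  let ⟨p, hpB, hpS⟩ := h
  ⟨p, fun e he => hB (hpB e he), fun w hw => hS (hpS w hw)⟩

lemma trans (h₁ : G.ReachableIn S B u v) (h₂ : G.ReachableIn S B v w) :
    G.ReachableIn S B u w := by
  obtain ⟨p, hpB, hpS⟩ := h₁
  obtain ⟨q, hqB, hqS⟩ := h₂
  refine ⟨p.append q, fun e he => ?_, fun x hx => ?_⟩
  · rcases List.mem_append.1 (p.edges_append q ▸ he) with he | he
    exacts [hpB e he, hqB e he]
  · rcases List.mem_append.1 (p.support_append q ▸ hx) with hx | hx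
    exacts [hpS x hx, hqS x (List.mem_of_mem_tail hx)]

lemma symm (h : G.ReachableIn S B u v) : G.ReachableIn S B v u :=
  let ⟨p, hpB, hpS⟩ := h
  ⟨p.reverse, fun e he => hpB e (by simpa using he), fun x hx => hpS x (by simpa using hx)⟩

lemma exists_mem_ends_of_ne (h : G.ReachableIn S B u v) (huv : u ≠ v) :
    ∃ g ∈ B, u ∈ G.ends g := by
  obtain ⟨p, hpB, -⟩ := h
  cases p with
  | nil => exact absurd rfl huv
  | cons g hg _ => exact ⟨g, hpB g List.mem_cons_self, hg ▸ Sym2.mem_mk_left _ _⟩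

lemma of_insert {g : E} (hg : G.ends g = s(x, y)) (hxy : G.ReachableIn S B x y)
    (h : G.ReachableIn S (insert g B) u v) : G.ReachableIn S B u v := by
  obtain ⟨p, hpB, hpS⟩ := h
  induction p with
  | nil v => exact refl (hpS v List.mem_cons_self)
  | @cons u u' v e he p ih =>
    have hu : u ∈ S := hpS u List.mem_cons_self
    have hu' : u' ∈ S := hpS u' (List.mem_cons_of_mem _ p.start_mem_support)
    refine trans ?_ (ih (fun f hf => hpB f (List.mem_cons_of_mem _ hf))
      fun w hw => hpS w (List.mem_cons_of_mem _ hw))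
    rcases hpB e List.mem_cons_self with rfl | heB
    · rcases Sym2.eq_iff.1 (he.symm.trans hg) with ⟨rfl, rfl⟩ | ⟨rfl, rfl⟩
      exacts [hxy, hxy.symm]
    · exact of_ends he heB hu hu'

end ReachableIn

namespace Walk

variable {u v w z : V}

lemma reachableIn_end (p : G.Walk u v) (hw : w ∈ p.support) :
    G.ReachableIn {x | x ∈ p.support} {e | e ∈ p.edges} w v := by
  obtain ⟨p₁, p₂, rfl⟩ := p.exists_eq_append_of_mem_support hw
  exact ⟨p₂, fun e he => by simp [he], fun x hx => (p₁.support_suffix_append p₂).subset hx⟩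

lemma reachableIn_start_or_end_of_nodup (p : G.Walk u v) (hp : p.support.Nodup)
    (hw : w ∈ p.support) (hwz : w ≠ z) :
    G.ReachableIn ({x | x ∈ p.support} \ {z}) {e | e ∈ p.edges} w u ∨
      G.ReachableIn ({x | x ∈ p.support} \ {z}) {e | e ∈ p.edges} w v := by
  obtain ⟨p₁, p₂, rfl⟩ := p.exists_eq_append_of_mem_support hw
  rw [support_append] at hp
  by_cases hz : z ∈ p₁.support
  · refine Or.inr ⟨p₂, fun e he => by simp [he], fun x hx => ⟨?_, ?_⟩⟩
    · exact (p₁.support_suffix_append p₂).subset hx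
    · rintro rfl
      rw [p₂.support_eq_cons] at hx
      rcases List.mem_cons.1 hx with rfl | hx
      exacts [hwz rfl, (List.nodup_append.1 hp).2.2 _ hz _ hx rfl]
  · refine Or.inl ⟨p₁.reverse, fun e he => by simp_all, fun x hx => ⟨?_, ?_⟩⟩
    · simp_all [support_append]
    · rintro rfl
      exact hz (by simpa using hx)

end Walk

namespace MinTwoEdgeConn

lemma reachableIn_compl_singleton (h : G.MinTwoEdgeConn) (f : E) (u v : V) :
    G.ReachableIn Set.univ {f}ᶜ u v :=
  (h.1 {f} (Set.subset_univ _) (by simp) u trivial v trivial).mono subset_rfl (by simp)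

/-- Minimality: deleting `e` leaves a connected graph which is not `2`-edge-connected,
so it has a bridge `f`. -/
lemma exists_separating_pair (h : G.MinTwoEdgeConn) (e : E) :
    ∃ f ≠ e, ∃ u v, ¬ G.ReachableIn Set.univ {e, f}ᶜ u v := by
  obtain ⟨F, hFe, hF, u, -, v, -, huv⟩ : ∃ F : Finset E, ↑F ⊆ Set.univ \ {e} ∧ F.card < 2 ∧
      ∃ u ∈ Set.univ, ∃ v ∈ Set.univ, ¬ G.ReachableIn Set.univ ((Set.univ \ {e}) \ ↑F) u v := by
    simpa [EdgeConnAtLeastOn] using h.2.2 e trivial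
  rcases F.eq_empty_or_nonempty with rfl | ⟨f, hf⟩
  · refine (huv ((h.reachableIn_compl_singleton e u v).mono subset_rfl fun g hg => ?_)).elim
    exact ⟨⟨trivial, hg⟩, Finset.notMem_empty g⟩
  refine ⟨f, fun hfe => (hFe hf).2 hfe, u, v, fun hr => huv (hr.mono subset_rfl ?_)⟩
  intro g hg
  simp only [Set.mem_compl_iff, Set.mem_insert_iff, Set.mem_singleton_iff, not_or] at hg
  exact ⟨⟨trivial, hg.1⟩, fun hgF => hg.2 (Finset.card_le_one.1 (by omega) g hgF f hf)⟩

end MinTwoEdgeConn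

namespace IsBlock

variable {S : Set V} {B : Set E} {u v : V}

/-- Adding the path as an ear would give a larger connected subgraph without cut vertex. -/
lemma path_mem (hB : G.IsBlock S B) (hu : u ∈ S) (hv : v ∈ S) (P : G.Walk u v)
    (hP : P.support.Nodup) : (∀ x ∈ P.support, x ∈ S) ∧ ∀ e ∈ P.edges, e ∈ B := by
  obtain ⟨hsub, hconn, hncv, hmax⟩ := hB
  set S' := S ∪ {x | x ∈ P.support}
  set B' := B ∪ {e | e ∈ P.edges}
  have hSS' : S ⊆ S' := Set.subset_union_left
  have hBB' : B ⊆ B' := Set.subset_union_left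
  have to_S : ∀ w ∈ S', ∃ s ∈ S, G.ReachableIn S' B' w s := by
    rintro w (hw | hw)
    · exact ⟨w, hw, .refl (hSS' hw)⟩
    · exact ⟨v, hv, (P.reachableIn_end hw).mono Set.subset_union_right Set.subset_union_right⟩
  have to_S_avoiding : ∀ z, ∀ w ∈ S', w ≠ z →
      ∃ s ∈ S, s ≠ z ∧ G.ReachableIn (S' \ {z}) B' w s := by
    rintro z w (hw | hw) hwz
    · exact ⟨w, hw, hwz, .refl ⟨hSS' hw, hwz⟩⟩
    have hmono : ∀ {s}, G.ReachableIn ({x | x ∈ P.support} \ {z}) {e | e ∈ P.edges} w s →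
        G.ReachableIn (S' \ {z}) B' w s :=
      .mono (Set.sdiff_subset_sdiff_left Set.subset_union_right) Set.subset_union_right
    rcases P.reachableIn_start_or_end_of_nodup hP hw hwz with h | h
    · exact ⟨u, hu, h.mem_right.2, hmono h⟩
    · exact ⟨v, hv, h.mem_right.2, hmono h⟩
  have hsub' : G.IsSubgraphPair S' B' := by
    rintro e (he | he) x hx
    exacts [hSS' (hsub e he x hx), Or.inr (P.mem_support_of_mem_edges he x hx)]
  have hconn' : G.ConnectedOn S' B' := by
    refine ⟨hconn.1.mono hSS', fun w₁ hw₁ w₂ hw₂ => ?_⟩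
    obtain ⟨s₁, hs₁, h₁⟩ := to_S w₁ hw₁
    obtain ⟨s₂, hs₂, h₂⟩ := to_S w₂ hw₂
    exact (h₁.trans ((hconn.2 s₁ hs₁ s₂ hs₂).mono hSS' hBB')).trans h₂.symm
  have hncv' : G.NoCutVertexOn S' B' := by
    intro z w₁ hw₁ w₂ hw₂ hw₁z hw₂z
    obtain ⟨s₁, hs₁, hs₁z, h₁⟩ := to_S_avoiding z w₁ hw₁ hw₁z
    obtain ⟨s₂, hs₂, hs₂z, h₂⟩ := to_S_avoiding z w₂ hw₂ hw₂z
    have h := (hncv z s₁ hs₁ s₂ hs₂ hs₁z hs₂z).mono (Set.sdiff_subset_sdiff_left hSS') hBB'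
    exact (h₁.trans h).trans h₂.symm
  obtain ⟨hS, hB⟩ := hmax S' B' hSS' hBB' hsub' hconn' hncv'
  exact ⟨fun x hx => hS ▸ Or.inr hx, fun e he => hB ▸ Or.inr he⟩

lemma reachableIn_inter (hB : G.IsBlock S B) (hu : u ∈ S) (hv : v ∈ S) {D : Set E}
    (h : G.ReachableIn Set.univ D u v) : G.ReachableIn S (B ∩ D) u v := by
  obtain ⟨p, hpD, -⟩ := h
  obtain ⟨q, hq, hqp⟩ := p.exists_path
  obtain ⟨hqS, hqB⟩ := hB.path_mem hu hv q hq
  exact ⟨q, fun e he => ⟨hqB e he, hpD e (hqp e he)⟩, hqS⟩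

/-- Otherwise the edge `g` alone would form a larger subgraph without cut vertex. -/
lemma edges_nonempty (hB : G.IsBlock S B) {s : V} (hs : s ∈ S) {g : E} (hg : s ∈ G.ends g) :
    B.Nonempty := by
  rw [Set.nonempty_iff_ne_empty]
  rintro rfl
  set S' : Set V := {x | x ∈ G.ends g}
  have hedge : ∀ T : Set V, ∀ x ∈ S' ∩ T, ∀ y ∈ S' ∩ T, G.ReachableIn T {g} x y := by
    rintro T x ⟨hx, hxT⟩ y ⟨hy, hyT⟩
    rcases eq_or_ne x y with rfl | hne
    · exact .refl hxT
    · exact .of_ends ((Sym2.mem_and_mem_iff hne).1 ⟨hx, hy⟩) rfl hxT hyT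
  have hSS' : S ⊆ S' := fun t ht => by
    obtain ⟨p, hp, -⟩ := hB.2.1.2 s hs t ht
    cases p with
    | nil => exact hg
    | cons e _ _ => exact absurd (hp e List.mem_cons_self) id
  have hconn' : G.ConnectedOn S' {g} :=
    ⟨⟨s, hg⟩, fun x hx y hy => hedge S' x ⟨hx, hx⟩ y ⟨hy, hy⟩⟩
  have hncv' : G.NoCutVertexOn S' {g} :=
    fun z x hx y hy hxz hyz => hedge (S' \ {z}) x ⟨hx, hx, hxz⟩ y ⟨hy, hy, hyz⟩
  exact Set.singleton_ne_empty g (hB.2.2.2 S' {g} hSS' (Set.empty_subset _)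
    (by rintro _ rfl _ hx; exact hx) hconn' hncv').2

lemma edgeConnAtLeastOn_two (hB : G.IsBlock S B) (h : G.MinTwoEdgeConn) :
    G.EdgeConnAtLeastOn S B 2 := by
  intro F hFB hF u hu v hv
  have huv := hB.2.1.2 u hu v hv
  rcases F.eq_empty_or_nonempty with rfl | ⟨f, hf⟩
  · simpa using huv
  have hFf : ∀ g ∈ F, g = f := fun g hg => Finset.card_le_one.1 (by omega) g hg f hf
  obtain ⟨x, y, hxy⟩ := G.exists_ends_eq f
  have hx : x ∈ S := hB.1 f (hFB hf) x (by simp [hxy])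
  have hy : y ∈ S := hB.1 f (hFB hf) y (by simp [hxy])
  have hxy' : G.ReachableIn S (B \ F) x y :=
    (hB.reachableIn_inter hx hy (h.reachableIn_compl_singleton f x y)).mono subset_rfl
      fun g hg => ⟨hg.1, fun hgF => hg.2 (hFf g hgF)⟩
  refine ReachableIn.of_insert hxy hxy' (huv.mono subset_rfl fun g hg => ?_)
  by_cases hgF : g ∈ F
  exacts [Or.inl (hFf g hgF), Or.inr ⟨hg, hgF⟩]

lemma exists_separating_edge (hB : G.IsBlock S B) (h : G.MinTwoEdgeConn) {e : E} (he : e ∈ B) :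
    ∃ f ∈ B, f ≠ e ∧ ∃ x ∈ S, ∃ y ∈ S, ¬ G.ReachableIn Set.univ {e, f}ᶜ x y := by
  obtain ⟨f, hfe, u, v, huv⟩ := h.exists_separating_pair e
  obtain ⟨x, y, hxy⟩ := G.exists_ends_eq e
  have hx : x ∈ S := hB.1 e he x (by simp [hxy])
  have hy : y ∈ S := hB.1 e he y (by simp [hxy])
  have hnxy : ¬ G.ReachableIn Set.univ {e, f}ᶜ x y := fun hr =>
    huv (ReachableIn.of_insert hxy hr ((h.reachableIn_compl_singleton f u v).mono subset_rfl
      fun g hg => by by_cases hge : g = e <;> simp_all))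
  refine ⟨f, ?_, hfe, x, hx, y, hy, hnxy⟩
  -- a path from `x` to `y` avoiding `e` stays in the block, and must use `f`
  by_contra hfB
  refine hnxy ((hB.reachableIn_inter hx hy (h.reachableIn_compl_singleton e x y)).mono
    (Set.subset_univ _) fun g hg => ?_)
  simp only [Set.mem_compl_iff, Set.mem_insert_iff, Set.mem_singleton_iff, not_or]
  exact ⟨hg.2, fun hgf => hfB (hgf ▸ hg.1)⟩

end IsBlock

end Multigraph

/-- Every block of a minimally `2`-edge-connected multigraph (of order at least `3`)
is minimally `2`-edge-connected. -/
theorem stmt_13 {V E : Type} [Fintype V] (G : Multigraph V E)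
    (h3 : 3 ≤ Fintype.card V) (h : G.MinTwoEdgeConn) :
    ∀ (S : Set V) (B : Set E), G.IsBlock S B → G.MinTwoEdgeConnOn S B := by
  classical
  intro S B hB
  refine ⟨hB.edgeConnAtLeastOn_two h, fun hB3 => ?_, fun e he hBe => ?_⟩
  · obtain ⟨s, hs⟩ := hB.2.1.1
    obtain ⟨t, hts⟩ := Fintype.exists_ne_of_one_lt_card (by omega) s
    obtain ⟨g, -, hg⟩ := (h.1 ∅ (by simp) (by simp) s trivial t trivial).exists_mem_ends_of_ne
      hts.symm
    obtain ⟨e, he⟩ := hB.edges_nonempty hs hg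
    obtain ⟨f, hf, -, x, hx, y, hy, hxy⟩ := hB.exists_separating_edge h he
    have hcard : ({e, f} : Finset E).card < 3 := (Finset.card_le_two).trans_lt (by norm_num)
    refine hxy ((hB3 {e, f} ?_ hcard x hx y hy).mono (Set.subset_univ _) ?_)
    · simp [Set.insert_subset_iff, he, hf]
    · intro g hg; simpa using hg.2
  · obtain ⟨f, hf, hfe, x, hx, y, hy, hxy⟩ := hB.exists_separating_edge h he
    refine hxy ((hBe {f} (by simpa using ⟨hf, hfe⟩) (by simp) x hx y hy).mono
      (Set.subset_univ _) fun g hg => ?_)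
    simp only [Set.mem_sdiff, Set.mem_singleton_iff, Finset.coe_singleton] at hg
    simp [hg.1.2, hg.2]
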